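/- Let (X_i, f_i) be an inverse sequence of compact metric spaces and let A_i ⊆ X_i be compact subsets with f_{i+1}(A_{i+1}) ⊆ A_i for all i. Let X = lim(X_i, f_i) and A = { x ∈ X : x_i ∈ A_i for all i }. For each i, let K_i be a nonempty collection of maps of pairs (X_{i+1}, A_{i+1}) → (X_i, A_i), and suppose that for every i and every ε > 0 there exists g ∈ K_i with sup_{x ∈ X_{i+1}} dist(f_{i+1}(x), g(x)) < ε. Then there is a sequence (g_i) with g_i ∈ K_i for every i and a homeomorphism φ : X → lim(X_i, g_i) such that φ(A) = { y ∈ lim(X_i, g_i) : y_i ∈ A_i for all i }. -/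

import Mathlib

/-!
Choose `g m ∈ K m` inductively together with radii `η m`, halving at each step, such that `η m`
is a common modulus of uniform continuity at scale `2⁻ᵐ` of all composites `f^m_n` and `g^m_n`
(`n ≤ m`), and `g m` is so close to `f m` that these composites keep `f m x` and `g m x` within
`η m / 2` of each other. For a thread `x` of `f`, the points `g^{n+k}_n (x (n + k))` then converge
geometrically as `k → ∞`, to a thread `T x` of `g`, the shadow of `x`, which is `η m`-close to `x`
at every level `m`; symmetrically for `S` from `g` to `f`. Uniform convergence makes `T` and `S`
continuous, closedness of the `A n` makes them preserve the pairs, and the moduli force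
`S ∘ T = id` and `T ∘ S = id`.
-/

open Filter Topology Set

lemma tendsto_div_two_pow (c : ℝ) : Tendsto (fun k : ℕ => c / 2 ^ k) atTop (𝓝 0) :=
  tendsto_const_nhds.div_atTop (tendsto_pow_atTop_atTop_of_one_lt one_lt_two)

lemma exists_seq_of_forall_prefix_exists {β : ℕ → Sort*}
    (P : ∀ j, (∀ i < j, β i) → β j → Prop) (h : ∀ j prev, ∃ b, P j prev b) :
    ∃ b : ∀ j, β j, ∀ j, P j (fun i _ => b i) (b j) := by
  choose c hc using h
  refine ⟨Nat.strongRec c, fun j => ?_⟩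
  simp only [Nat.strongRec_eq c j]
  exact hc j _

namespace InverseSequence

variable {X : ℕ → Type*}

/-- The composite `F^m_n : X m → X n`; `F k : X (k + 1) → X k` is the bonding map `f_{k+1}`. -/
def comp (F : ∀ n, X (n + 1) → X n) {n m : ℕ} (h : n ≤ m) : X m → X n :=
  Nat.leRecOn h (fun c => c ∘ F _) id

section Comp

variable (F : ∀ n, X (n + 1) → X n) {n m : ℕ}

@[simp]
lemma comp_self (h : n ≤ n) (x : X n) : comp F h x = x := by
  simp [comp, Nat.leRecOn_self]

lemma comp_succ (h : n ≤ m) (h' : n ≤ m + 1) (x : X (m + 1)) :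
    comp F h' x = comp F h (F m x) := by
  simp [comp, Nat.leRecOn_succ h]

lemma comp_eq_apply_comp (h : n + 1 ≤ m) (h' : n ≤ m) (x : X m) :
    comp F h' x = F n (comp F h x) := by
  induction m, h using Nat.le_induction with
  | base => rw [comp_succ F le_rfl, comp_self, comp_self]
  | succ m hm ih => rw [comp_succ F (by omega), comp_succ F hm, ih]

lemma comp_apply_congr (x : ∀ n, X n) {m' : ℕ} (e : m = m') (h : n ≤ m) (h' : n ≤ m') :
    comp F h (x m) = comp F h' (x m') := by
  subst e; rfl

lemma comp_congr {G : ∀ n, X (n + 1) → X n} (hFG : ∀ k < m, F k = G k) (h : n ≤ m)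
    (x : X m) : comp F h x = comp G h x := by
  induction m, h using Nat.le_induction with
  | base => simp
  | succ m hm ih =>
    rw [comp_succ F hm, comp_succ G hm, hFG m (by omega), ih fun k hk => hFG k (by omega)]

lemma comp_of_compatible {x : ∀ n, X n} (hx : ∀ k, F k (x (k + 1)) = x k) (h : n ≤ m) :
    comp F h (x m) = x n := by
  induction m, h using Nat.le_induction with
  | base => simp
  | succ m hm ih => rw [comp_succ F hm, hx m, ih]

lemma mapsTo_comp {A : ∀ n, Set (X n)} (hF : ∀ k, MapsTo (F k) (A (k + 1)) (A k))
    (h : n ≤ m) : MapsTo (comp F h) (A m) (A n) := by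
  induction m, h using Nat.le_induction with
  | base => intro x hx; simpa using hx
  | succ m hm ih => intro x hx; rw [comp_succ F hm]; exact ih (hF m hx)

variable [∀ n, TopologicalSpace (X n)]

lemma continuous_comp (hF : ∀ k, Continuous (F k)) (h : n ≤ m) : Continuous (comp F h) := by
  induction m, h using Nat.le_induction with
  | base => exact continuous_id.congr fun x => (comp_self F _ x).symm
  | succ m hm ih => exact (ih.comp (hF m)).congr fun x => (comp_succ F hm _ x).symm

end Comp

abbrev limit (F : ∀ n, X (n + 1) → X n) : Type _ := {x : ∀ n, X n // ∀ n, F n (x (n + 1)) = x n}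

section Metric

variable [∀ n, MetricSpace (X n)]

def IsModulusAt (F : ∀ n, X (n + 1) → X n) (m : ℕ) (δ ε : ℝ) : Prop :=
  ∀ n (h : n ≤ m) (a b : X m), dist a b ≤ δ → dist (comp F h a) (comp F h b) ≤ ε

lemma isModulusAt_congr {F G : ∀ n, X (n + 1) → X n} {m : ℕ} (hFG : ∀ k < m, F k = G k)
    {δ ε : ℝ} : IsModulusAt F m δ ε ↔ IsModulusAt G m δ ε := by
  simp only [IsModulusAt, comp_congr F hFG]

lemma eventually_isModulusAt {F : ∀ n, X (n + 1) → X n} {m : ℕ} [CompactSpace (X m)]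
    (hF : ∀ k, Continuous (F k)) {ε : ℝ} (hε : 0 < ε) :
    ∀ᶠ δ in 𝓝[>] 0, IsModulusAt F m δ ε := by
  have hfin : ∀ᶠ δ in 𝓝[>] (0 : ℝ), ∀ n ∈ Iic m, ∀ (h : n ≤ m) (a b : X m),
      dist a b ≤ δ → dist (comp F h a) (comp F h b) ≤ ε := by
    refine (eventually_all_finite (finite_Iic m)).2 fun n hn => ?_
    obtain ⟨δ₀, hδ₀, hδ₀'⟩ := Metric.uniformContinuous_iff.1
      (CompactSpace.uniformContinuous_of_continuous (continuous_comp F hF hn)) ε hε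
    filter_upwards [Ioo_mem_nhdsGT hδ₀] with δ hδ h a b hab
    exact (hδ₀' (hab.trans_lt hδ.2)).le
  filter_upwards [hfin] with δ hδ n h using hδ n h h

def IsShadow (v : ∀ n, X (n + 1) → X n) (η : ℕ → ℝ) (x y : ∀ n, X n) : Prop :=
  ∀ n k, dist (comp v (Nat.le_add_right n k) (x (n + k))) (y n) ≤ η n / 2 ^ k

namespace IsShadow

variable {v : ∀ n, X (n + 1) → X n} {η : ℕ → ℝ} {x y : ∀ n, X n}

lemma dist_le (hxy : IsShadow v η x y) (n : ℕ) : dist (x n) (y n) ≤ η n := by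
  simpa using hxy n 0

lemma tendsto (hxy : IsShadow v η x y) (n : ℕ) :
    Tendsto (fun k => comp v (Nat.le_add_right n k) (x (n + k))) atTop (𝓝 (y n)) :=
  tendsto_iff_dist_tendsto_zero.2 <|
    squeeze_zero (fun _ => dist_nonneg) (hxy n) (tendsto_div_two_pow _)

lemma mem {A : ∀ n, Set (X n)} (hA : ∀ n, IsClosed (A n))
    (hvA : ∀ n, MapsTo (v n) (A (n + 1)) (A n)) (hx : ∀ n, x n ∈ A n)
    (hxy : IsShadow v η x y) (n : ℕ) : y n ∈ A n :=
  (hA n).mem_of_tendsto (hxy.tendsto n) <|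
    Eventually.of_forall fun _ => mapsTo_comp v hvA _ (hx _)

lemma eq_of_isShadow {u : ∀ n, X (n + 1) → X n} {z : ∀ n, X n}
    (hmod : ∀ m, IsModulusAt u m (η m) ((1 / 2) ^ m)) (hx : ∀ n, u n (x (n + 1)) = x n)
    (hxy : IsShadow v η x y) (hyz : IsShadow u η y z) : z = x := by
  funext n
  have hle : ∀ k, dist (z n) (x n) ≤ η n / 2 ^ k + (1 / 2) ^ (n + k) := fun k =>
    calc dist (z n) (x n)
        ≤ dist (comp u (Nat.le_add_right n k) (y (n + k))) (z n) +
            dist (comp u (Nat.le_add_right n k) (y (n + k)))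
              (comp u (Nat.le_add_right n k) (x (n + k))) := by
          rw [comp_of_compatible u hx]; exact dist_triangle_left _ _ _
      _ ≤ η n / 2 ^ k + (1 / 2) ^ (n + k) := by
          gcongr
          · exact hyz n k
          · exact hmod _ _ _ _ _ (by rw [dist_comm]; exact hxy.dist_le _)
  have hlim : Tendsto (fun k => η n / 2 ^ k + (1 / 2 : ℝ) ^ (n + k)) atTop (𝓝 0) := by
    have hpow := (tendsto_pow_atTop_nhds_zero_of_lt_one (by norm_num)
      (by norm_num : (1 / 2 : ℝ) < 1)).comp (tendsto_add_atTop_nat n)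
    simpa [Function.comp_def, add_comm] using (tendsto_div_two_pow (η n)).add hpow
  exact dist_le_zero.1 (ge_of_tendsto' hlim hle)

end IsShadow

lemma continuous_of_isShadow {α : Type*} [TopologicalSpace α] {v : ∀ n, X (n + 1) → X n}
    {η : ℕ → ℝ} {x y : α → ∀ n, X n} (hv : ∀ n, Continuous (v n)) (hx : Continuous x)
    (hxy : ∀ a, IsShadow v η (x a) (y a)) : Continuous y := by
  refine continuous_pi fun n => ?_
  have hunif : TendstoUniformly (fun k a => comp v (Nat.le_add_right n k) (x a (n + k)))
      (fun a => y a n) atTop := by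
    refine Metric.tendstoUniformly_iff.2 fun ε hε => ?_
    filter_upwards [(tendsto_div_two_pow (η n)).eventually (gt_mem_nhds hε)] with k hk a
    rw [dist_comm]
    exact (hxy a n k).trans_lt hk
  exact hunif.continuous (Frequently.of_forall fun k =>
    (continuous_comp v hv _).comp ((continuous_apply _).comp hx))

lemma exists_isShadow [∀ n, CompleteSpace (X n)] {u v : ∀ n, X (n + 1) → X n}
    {η : ℕ → ℝ} (hv : ∀ n, Continuous (v n)) (hη : ∀ n k, η (n + k) ≤ η n / 2 ^ k)
    (happrox : ∀ m n (h : n ≤ m) (x : X (m + 1)),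
      dist (comp v h (u m x)) (comp v h (v m x)) ≤ η m / 2)
    {x : ∀ n, X n} (hx : ∀ n, u n (x (n + 1)) = x n) :
    ∃ y : ∀ n, X n, (∀ n, v n (y (n + 1)) = y n) ∧ IsShadow v η x y := by
  set s : ∀ n, ℕ → X n := fun n k => comp v (Nat.le_add_right n k) (x (n + k))
  have hstep : ∀ n k, dist (s n k) (s n (k + 1)) ≤ η n / 2 / 2 ^ k := fun n k =>
    calc dist (s n k) (s n (k + 1))
        = dist (comp v (Nat.le_add_right n k) (u (n + k) (x (n + k + 1))))
            (comp v (Nat.le_add_right n k) (v (n + k) (x (n + k + 1)))) := by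
          rw [hx, ← comp_succ v _ (by omega)]; rfl
      _ ≤ η (n + k) / 2 := happrox _ _ _ _
      _ ≤ η n / 2 / 2 ^ k := by rw [div_right_comm]; gcongr; exact hη n k
  choose y hy using fun n =>
    cauchySeq_tendsto_of_complete (cauchySeq_of_le_geometric_two (hstep n))
  refine ⟨y, fun n => tendsto_nhds_unique ?_ ((tendsto_add_atTop_iff_nat 1).2 (hy n)),
    fun n k => dist_le_of_le_geometric_two_of_tendsto (hstep n) (hy n) k⟩
  refine (((hv n).tendsto _).comp (hy (n + 1))).congr fun k => ?_
  simp only [Function.comp_apply, s]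
  rw [comp_eq_apply_comp v (by omega : n + 1 ≤ n + (k + 1)),
    comp_apply_congr v x (by omega : n + 1 + k = n + (k + 1))]

lemma eventually_exists_approx {f G : ∀ n, X (n + 1) → X n} {m : ℕ} [CompactSpace (X m)]
    (hf : ∀ n, Continuous (f n)) (hG : ∀ n, Continuous (G n)) {K : Set (X (m + 1) → X m)}
    (happrox : ∀ ε > 0, ∃ g ∈ K, ∀ x, dist (f m x) (g x) < ε) {ε : ℝ} (hε : 0 < ε) :
    ∀ᶠ η in 𝓝[>] 0, IsModulusAt f m η ε ∧ IsModulusAt G m η ε ∧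
      ∃ g ∈ K, ∀ n (h : n ≤ m) x, dist (comp f h (g x)) (comp f h (f m x)) ≤ η / 2 ∧
        dist (comp G h (f m x)) (comp G h (g x)) ≤ η / 2 := by
  filter_upwards [eventually_isModulusAt (m := m) hf hε, eventually_isModulusAt (m := m) hG hε,
    self_mem_nhdsWithin] with η hfη hGη (hη : 0 < η)
  obtain ⟨δ, ⟨hfδ, hGδ⟩, hδ : 0 < δ⟩ :=
    ((eventually_isModulusAt (m := m) hf (half_pos hη)).and
      (eventually_isModulusAt (m := m) hG (half_pos hη))).and self_mem_nhdsWithin |>.exists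
  obtain ⟨g, hgK, hg⟩ := happrox δ hδ
  exact ⟨hfη, hGη, g, hgK, fun n h x =>
    ⟨hfδ n h _ _ (dist_comm (f m x) _ ▸ (hg x).le), hGδ n h _ _ (hg x).le⟩⟩

structure IsBrownApprox (f g : ∀ n, X (n + 1) → X n) (η : ℕ → ℝ) : Prop where
  le_div_two_pow : ∀ n k, η (n + k) ≤ η n / 2 ^ k
  isModulusAt_left : ∀ m, IsModulusAt f m (η m) ((1 / 2) ^ m)
  isModulusAt_right : ∀ m, IsModulusAt g m (η m) ((1 / 2) ^ m)
  dist_comp_left_le : ∀ m n (h : n ≤ m) x, dist (comp f h (g m x)) (comp f h (f m x)) ≤ η m / 2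
  dist_comp_right_le : ∀ m n (h : n ≤ m) x, dist (comp g h (f m x)) (comp g h (g m x)) ≤ η m / 2

namespace IsBrownApprox

variable {f g : ∀ n, X (n + 1) → X n} {η : ℕ → ℝ}

lemma symm (h : IsBrownApprox f g η) : IsBrownApprox g f η :=
  ⟨h.le_div_two_pow, h.isModulusAt_right, h.isModulusAt_left, h.dist_comp_right_le,
    h.dist_comp_left_le⟩

variable [∀ n, CompleteSpace (X n)]

lemma exists_continuous_isShadow (h : IsBrownApprox f g η) (hg : ∀ n, Continuous (g n)) :
    ∃ T : limit f → limit g, Continuous T ∧ ∀ x, IsShadow g η x.1 (T x).1 := by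
  choose T hT using fun x : limit f => exists_isShadow hg h.le_div_two_pow h.dist_comp_right_le x.2
  exact ⟨fun x => ⟨T x, (hT x).1⟩,
    (continuous_of_isShadow hg continuous_subtype_val fun x => (hT x).2).subtype_mk _,
    fun x => (hT x).2⟩

lemma exists_homeomorph (h : IsBrownApprox f g η) (hf : ∀ n, Continuous (f n))
    (hg : ∀ n, Continuous (g n)) {A : ∀ n, Set (X n)} (hA : ∀ n, IsClosed (A n))
    (hfA : ∀ n, MapsTo (f n) (A (n + 1)) (A n)) (hgA : ∀ n, MapsTo (g n) (A (n + 1)) (A n)) :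
    ∃ φ : limit f ≃ₜ limit g, φ '' {x | ∀ n, x.1 n ∈ A n} = {y | ∀ n, y.1 n ∈ A n} := by
  obtain ⟨T, hTc, hT⟩ := h.exists_continuous_isShadow hg
  obtain ⟨S, hSc, hS⟩ := h.symm.exists_continuous_isShadow hf
  let φ : limit f ≃ₜ limit g :=
    { toFun := T
      invFun := S
      left_inv x := Subtype.ext <| (hT x).eq_of_isShadow h.isModulusAt_left x.2 (hS (T x))
      right_inv y := Subtype.ext <| (hS y).eq_of_isShadow h.isModulusAt_right y.2 (hT (S y))
      continuous_toFun := hTc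
      continuous_invFun := hSc }
  refine ⟨φ, Subset.antisymm ?_ fun y hy => ⟨φ.symm y, (hS y).mem hA hfA hy, φ.apply_symm_apply y⟩⟩
  rintro _ ⟨x, hx, rfl⟩
  exact (hT x).mem hA hgA hx

end IsBrownApprox

lemma exists_isBrownApprox [∀ n, CompactSpace (X n)] {f : ∀ n, X (n + 1) → X n}
    {K : ∀ i, Set (X (i + 1) → X i)} (hf : ∀ n, Continuous (f n))
    (hK : ∀ i, ∀ g ∈ K i, Continuous g)
    (happrox : ∀ i, ∀ ε > (0 : ℝ), ∃ g ∈ K i, ∀ x, dist (f i x) (g x) < ε) :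
    ∃ (g : ∀ n, X (n + 1) → X n) (η : ℕ → ℝ), (∀ i, g i ∈ K i) ∧ IsBrownApprox f g η := by
  -- composites at level `j` only see the maps below `j`; `f` merely pads the sequence
  let G (j : ℕ) (prev : ∀ i < j, K i × Ioi (0 : ℝ)) (i : ℕ) : X (i + 1) → X i :=
    if h : i < j then (prev i h).1 else f i
  have hG : ∀ j prev i, Continuous (G j prev i) := fun j prev i => by
    unfold G; split_ifs
    exacts [hK _ _ (prev i ‹_›).1.2, hf i]
  have hstep : ∀ j (prev : ∀ i < j, K i × Ioi (0 : ℝ)), ∃ b : K j × Ioi (0 : ℝ),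
      (∀ i (hi : i < j), (b.2 : ℝ) ≤ ((prev i hi).2 : ℝ) / 2 ^ (j - i)) ∧
      IsModulusAt f j b.2 ((1 / 2) ^ j) ∧ IsModulusAt (G j prev) j b.2 ((1 / 2) ^ j) ∧
      ∀ n (h : n ≤ j) x, dist (comp f h (b.1.1 x)) (comp f h (f j x)) ≤ b.2 / 2 ∧
        dist (comp (G j prev) h (f j x)) (comp (G j prev) h (b.1.1 x)) ≤ b.2 / 2 := by
    intro j prev
    have hsmall : ∀ᶠ η in 𝓝[>] (0 : ℝ), ∀ i ∈ Iio j, ∀ hi : i < j,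
        η ≤ ((prev i hi).2 : ℝ) / 2 ^ (j - i) :=
      (eventually_all_finite (finite_Iio j)).2 fun i hi => by
        filter_upwards [nhdsWithin_le_nhds (eventually_lt_nhds
          (div_pos (prev i hi).2.2 (pow_pos two_pos _)))] with η hη _ using hη.le
    obtain ⟨η, ⟨hsmall, hmf, hmG, g, hgK, happ⟩, hη : 0 < η⟩ := ((hsmall.and
      (eventually_exists_approx hf (hG j prev) (happrox j) (ε := (1 / 2) ^ j)
        (by positivity))).and self_mem_nhdsWithin).exists
    exact ⟨(⟨g, hgK⟩, ⟨η, hη⟩), fun i hi => hsmall i hi hi, hmf, hmG, happ⟩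
  obtain ⟨b, hb⟩ := exists_seq_of_forall_prefix_exists _ hstep
  have hGb : ∀ m, ∀ i < m, G m (fun i _ => b i) i = (b i).1 := fun m i hi => dif_pos hi
  refine ⟨fun i => (b i).1, fun i => (b i).2, fun i => (b i).1.2, ⟨fun n k => ?_,
    fun m => (hb m).2.1, fun m => (isModulusAt_congr (hGb m)).1 (hb m).2.2.1,
    fun m n h x => ((hb m).2.2.2 n h x).1, fun m n h x => ?_⟩⟩
  · rcases Nat.eq_zero_or_pos k with rfl | hk
    · simp
    · simpa using (hb (n + k)).1 n (by omega)
  · rw [← comp_congr _ (hGb m), ← comp_congr _ (hGb m)]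
    exact ((hb m).2.2.2 n h x).2

end Metric

end InverseSequence

open InverseSequence in
theorem brown_approximation_inverse_limit_pairs_general
    (X : ℕ → Type) [∀ n, MetricSpace (X n)] [∀ n, CompactSpace (X n)]
    (A : ∀ n, Set (X n)) (hA : ∀ n, IsCompact (A n))
    (f : ∀ n, X (n + 1) → X n) (hf : ∀ n, Continuous (f n))
    (hfA : ∀ n, Set.MapsTo (f n) (A (n + 1)) (A n))
    (K : ∀ i, Set (X (i + 1) → X i))
    (hKpair : ∀ i, ∀ g ∈ K i, Continuous g ∧ Set.MapsTo g (A (i + 1)) (A i))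
    (happrox : ∀ i, ∀ ε > (0 : ℝ), ∃ g ∈ K i, ∀ x, dist (f i x) (g x) < ε) :
    ∃ g : ∀ n, X (n + 1) → X n, (∀ i, g i ∈ K i) ∧
      ∃ φ : {x : ∀ n, X n // ∀ n, f n (x (n + 1)) = x n} ≃ₜ
          {y : ∀ n, X n // ∀ n, g n (y (n + 1)) = y n},
        φ '' {x | ∀ n, x.1 n ∈ A n} = {y | ∀ n, y.1 n ∈ A n} := by
  obtain ⟨g, η, hgK, hfg⟩ :=
    exists_isBrownApprox hf (fun i g hg => (hKpair i g hg).1) happrox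
  obtain ⟨φ, hφ⟩ := hfg.exists_homeomorph hf (fun n => (hKpair n _ (hgK n)).1)
    (fun n => (hA n).isClosed) hfA (fun n => (hKpair n _ (hgK n)).2)
  exact ⟨g, hgK, φ, hφ⟩

/-- Brown's approximation theorem for pairs: if each bonding map `f_{i+1}` of an inverse
sequence of pairs of compact metric spaces can be approximated arbitrarily well by maps
from a nonempty collection `K_i` of maps of pairs, then one may choose `g_i ∈ K_i` so
that the two inverse limits are homeomorphic via a homeomorphism carrying the inverse
limit of the `A_i` along `f` to the inverse limit of the `A_i` along `g`. -/
theorem brown_approximation_inverse_limit_pairs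
    (X : ℕ → Type) [∀ n, MetricSpace (X n)] [∀ n, CompactSpace (X n)]
    (A : ∀ n, Set (X n)) (hA : ∀ n, IsCompact (A n))
    (f : ∀ n, X (n + 1) → X n) (hf : ∀ n, Continuous (f n))
    (hfA : ∀ n, Set.MapsTo (f n) (A (n + 1)) (A n))
    (K : ∀ i, Set (X (i + 1) → X i))
    (hKne : ∀ i, (K i).Nonempty)
    (hKpair : ∀ i, ∀ g ∈ K i, Continuous g ∧ Set.MapsTo g (A (i + 1)) (A i))
    (happrox : ∀ i, ∀ ε > (0 : ℝ), ∃ g ∈ K i, ∀ x, dist (f i x) (g x) < ε) :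
    ∃ g : ∀ n, X (n + 1) → X n, (∀ i, g i ∈ K i) ∧
      ∃ φ : {x : ∀ n, X n // ∀ n, f n (x (n + 1)) = x n} ≃ₜ
          {y : ∀ n, X n // ∀ n, g n (y (n + 1)) = y n},
        φ '' {x | ∀ n, x.1 n ∈ A n} = {y | ∀ n, y.1 n ∈ A n} :=
  brown_approximation_inverse_limit_pairs_general X A hA f hf hfA K hKpair happrox
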